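/- (CDF, Case 1.) Suppose θ₁+θ₂ ≠ θ₁′ and θ₁+θ₂ ≠ θ₂′. Then for the joint CDF F(y₁,y₂) = ∫_a^{y₁} ∫_a^{y₂} f(u,v) dv du of the DPRH model: if a < y₁ < y₂ < b then F(y₁,y₂) = F₀(y₁)^{θ₁+θ₂} + (θ₂ F₀(y₁)^{θ₁′}/(θ₁+θ₂−θ₁′))·[F₀(y₂)^{θ₁+θ₂−θ₁′} − F₀(y₁)^{θ₁+θ₂−θ₁′}], and if a < y₂ < y₁ < b then F(y₁,y₂) = F₀(y₂)^{θ₁+θ₂} + (θ₁ F₀(y₂)^{θ₂′}/(θ₁+θ₂−θ₂′))·[F₀(y₁)^{θ₁+θ₂−θ₂′} − F₀(y₂)^{θ₁+θ₂−θ₂′}]. -/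

import Mathlib

open MeasureTheory Set

noncomputable def dprh (a b : ℝ) (F₀ f₀ : ℝ → ℝ) (θ₁ θ₂ θ₁' θ₂' : ℝ) (y₁ y₂ : ℝ) : ℝ :=
  if a < y₁ ∧ y₁ < y₂ ∧ y₂ < b then
    θ₁' * θ₂ * f₀ y₁ * f₀ y₂ * F₀ y₁ ^ (θ₁' - 1) * F₀ y₂ ^ (θ₁ + θ₂ - θ₁' - 1)
  else if a < y₂ ∧ y₂ < y₁ ∧ y₁ < b then
    θ₁ * θ₂' * f₀ y₁ * f₀ y₂ * F₀ y₁ ^ (θ₁ + θ₂ - θ₂' - 1) * F₀ y₂ ^ (θ₂' - 1)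
  else 0

/-! On either side of the diagonal the density factors as `c(u) * (f₀ v * F₀ v ^ (p - 1))`, and
`f₀ * F₀ ^ (p - 1)` is the derivative of `F₀ ^ p / p`, so both the inner and the outer integral
are evaluated by the fundamental theorem of calculus. Integrals starting at `a` only occur with
`p > 0`: there the primitive tends to `0` at `a⁺`, and the nonnegative integrand is integrable up
to `a`. For `y₂ < y₁` the outer integral is split at `y₂`, where the first case applies. -/

open Filter Topology intervalIntegral

def HasIntervalIntegral (g : ℝ → ℝ) (s t I : ℝ) : Prop :=
  IntervalIntegrable g volume s t ∧ ∫ x in s..t, g x = I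

namespace HasIntervalIntegral

variable {g h : ℝ → ℝ} {s t r I J : ℝ}

lemma const_mul (hg : HasIntervalIntegral g s t I) (c : ℝ) :
    HasIntervalIntegral (fun x => c * g x) s t (c * I) :=
  ⟨hg.1.const_mul c, by rw [intervalIntegral.integral_const_mul, hg.2]⟩

lemma add (hg : HasIntervalIntegral g s t I) (hh : HasIntervalIntegral h s t J) :
    HasIntervalIntegral (fun x => g x + h x) s t (I + J) :=
  ⟨hg.1.add hh.1, by rw [integral_add hg.1 hh.1, hg.2, hh.2]⟩

lemma trans (hst : HasIntervalIntegral g s t I) (htr : HasIntervalIntegral g t r J) :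
    HasIntervalIntegral g s r (I + J) :=
  ⟨hst.1.trans htr.1, by rw [← integral_add_adjacent_intervals hst.1 htr.1, hst.2, htr.2]⟩

lemma congr_ae (hg : HasIntervalIntegral g s t I) (hgh : ∀ᵐ x, x ∈ uIoc s t → h x = g x) :
    HasIntervalIntegral h s t I :=
  ⟨hg.1.congr_ae (EventuallyEq.symm ((ae_restrict_iff' measurableSet_uIoc).2 hgh)),
    by rw [integral_congr_ae hgh, hg.2]⟩

end HasIntervalIntegral

section Primitive

variable {F f : ℝ → ℝ} {a b s t p : ℝ}

lemma hasDerivAt_rpow_div {x : ℝ} (hF : HasDerivAt F (f x) x) (hFx : F x ≠ 0) (hp : p ≠ 0) :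
    HasDerivAt (fun v => F v ^ p / p) (f x * F x ^ (p - 1)) x := by
  have := (hF.rpow_const (p := p) (Or.inl hFx)).div_const p
  rwa [mul_right_comm, mul_div_cancel_right₀ _ hp] at this

lemma hasIntervalIntegral_deriv_of_nonneg_of_tendsto {g g' : ℝ → ℝ} {ga : ℝ} (hat : a < t)
    (hderiv : ∀ x ∈ Ioc a t, HasDerivAt g (g' x) x) (hpos : ∀ x ∈ Ioo a t, 0 ≤ g' x)
    (ha : Tendsto g (𝓝[>] a) (𝓝 ga)) :
    HasIntervalIntegral g' a t (g t - ga) := by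
  -- `g a` is arbitrary; redefining it as the limit `ga` makes `g` continuous on `[a, t]`.
  have hcont : ContinuousOn (Function.update g a ga) (Icc a t) := by
    rw [continuousOn_update_iff, Icc_sdiff_left]
    exact ⟨fun x hx => (hderiv x hx).continuousAt.continuousWithinAt,
      fun _ => ha.mono_left (nhdsWithin_mono _ Ioc_subset_Ioi_self)⟩
  have hderiv' : ∀ x ∈ Ioo a t, HasDerivAt (Function.update g a ga) (g' x) x := fun x hx =>
    (hderiv x (Ioo_subset_Ioc_self hx)).congr_of_eventuallyEq <| by
      filter_upwards [Ioi_mem_nhds hx.1] with y hy using Function.update_of_ne hy.ne' _ _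
  have hint : IntervalIntegrable g' volume a t :=
    (intervalIntegrable_iff_integrableOn_Ioc_of_le hat.le).2
      (integrableOn_deriv_of_nonneg hcont hderiv' hpos)
  refine ⟨hint, ?_⟩
  simpa [Function.update_of_ne hat.ne'] using
    integral_eq_sub_of_hasDerivAt_of_le hat.le hcont hderiv' hint

variable (hderiv : ∀ y ∈ Ioo a b, HasDerivAt F (f y) y) (hf : ∀ y ∈ Ioo a b, 0 ≤ f y)
  (hF : ∀ y ∈ Ioo a b, 0 < F y)
include hderiv hf hF

lemma hasIntervalIntegral_mul_rpow_sub_one (hp : p ≠ 0) (hs : s ∈ Ioo a b) (ht : t ∈ Ioo a b) :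
    HasIntervalIntegral (fun v => f v * F v ^ (p - 1)) s t (F t ^ p / p - F s ^ p / p) := by
  have hsub : uIcc s t ⊆ Ioo a b := ordConnected_Ioo.uIcc_subset hs ht
  have hd : ∀ x ∈ uIcc s t, HasDerivAt (fun v => F v ^ p / p) (f x * F x ^ (p - 1)) x :=
    fun x hx => hasDerivAt_rpow_div (hderiv x (hsub hx)) (hF x (hsub hx)).ne' hp
  have hint : IntervalIntegrable (fun v => f v * F v ^ (p - 1)) volume s t :=
    intervalIntegrable_deriv_of_nonneg (HasDerivAt.continuousOn hd)
      (fun x hx => hd x (Ioo_subset_Icc_self hx)) fun x hx =>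
        have hx := hsub (Ioo_subset_Icc_self hx)
        mul_nonneg (hf x hx) (Real.rpow_nonneg (hF x hx).le _)
  exact ⟨hint, integral_eq_sub_of_hasDerivAt hd hint⟩

lemma hasIntervalIntegral_mul_rpow_sub_one_of_tendsto_zero (hFa : Tendsto F (𝓝[>] a) (𝓝 0))
    (hp : 0 < p) (ht : t ∈ Ioo a b) :
    HasIntervalIntegral (fun v => f v * F v ^ (p - 1)) a t (F t ^ p / p) := by
  have hsub : Ioc a t ⊆ Ioo a b := Ioc_subset_Ioo_right ht.2
  have h0 : Tendsto (fun v => F v ^ p / p) (𝓝[>] a) (𝓝 0) := by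
    simpa [Real.zero_rpow hp.ne'] using
      ((Real.continuousAt_rpow_const 0 p (Or.inr hp.le)).tendsto.comp hFa).div_const p
  simpa using hasIntervalIntegral_deriv_of_nonneg_of_tendsto ht.1
    (fun x hx => hasDerivAt_rpow_div (hderiv x (hsub hx)) (hF x (hsub hx)).ne' hp.ne')
    (fun x hx => have hx := hsub (Ioo_subset_Ioc_self hx)
      mul_nonneg (hf x hx) (Real.rpow_nonneg (hF x hx).le _)) h0

end Primitive

section Density

variable {a b : ℝ} {F₀ f₀ : ℝ → ℝ} {θ₁ θ₂ θ₁' θ₂' : ℝ}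

lemma dprh_of_lt {y₁ y₂ : ℝ} (h₁ : a < y₁) (h₁₂ : y₁ < y₂) (h₂ : y₂ < b) :
    dprh a b F₀ f₀ θ₁ θ₂ θ₁' θ₂' y₁ y₂ =
      θ₁' * θ₂ * f₀ y₁ * f₀ y₂ * F₀ y₁ ^ (θ₁' - 1) * F₀ y₂ ^ (θ₁ + θ₂ - θ₁' - 1) :=
  if_pos ⟨h₁, h₁₂, h₂⟩

lemma dprh_of_gt {y₁ y₂ : ℝ} (h₂ : a < y₂) (h₂₁ : y₂ < y₁) (h₁ : y₁ < b) :
    dprh a b F₀ f₀ θ₁ θ₂ θ₁' θ₂' y₁ y₂ =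
      θ₁ * θ₂' * f₀ y₁ * f₀ y₂ * F₀ y₁ ^ (θ₁ + θ₂ - θ₂' - 1) * F₀ y₂ ^ (θ₂' - 1) := by
  rw [dprh, if_neg fun h => h.2.1.asymm h₂₁, if_pos ⟨h₂, h₂₁, h₁⟩]

variable (hderiv : ∀ y ∈ Ioo a b, HasDerivAt F₀ (f₀ y) y) (hf₀ : ∀ y ∈ Ioo a b, 0 ≤ f₀ y)
  (hF₀ : ∀ y ∈ Ioo a b, 0 < F₀ y) (hFa : Tendsto F₀ (𝓝[>] a) (𝓝 0))
include hderiv hf₀ hF₀ hFa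

lemma hasIntervalIntegral_dprh_of_le (hθ₂' : 0 < θ₂') {u w : ℝ} (hu : u < b)
    (hw : w ∈ Ioo a b) (hwu : w ≤ u) :
    HasIntervalIntegral (dprh a b F₀ f₀ θ₁ θ₂ θ₁' θ₂' u) a w
      (θ₁ * F₀ w ^ θ₂' * (f₀ u * F₀ u ^ (θ₁ + θ₂ - θ₂' - 1))) := by
  have h := (hasIntervalIntegral_mul_rpow_sub_one_of_tendsto_zero hderiv hf₀ hF₀ hFa hθ₂'
    hw).const_mul (θ₁ * θ₂' * f₀ u * F₀ u ^ (θ₁ + θ₂ - θ₂' - 1))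
  convert h.congr_ae ?_ using 1
  · field_simp
  filter_upwards [volume.ae_ne u] with v hvu hv
  rw [uIoc_of_le hw.1.le] at hv
  rw [dprh_of_gt hv.1 ((hv.2.trans hwu).lt_of_ne hvu) hu]
  ring

lemma hasIntervalIntegral_dprh_of_ge (hθ₂' : 0 < θ₂') (hc : θ₁ + θ₂ - θ₁' ≠ 0) {u w : ℝ}
    (hu : u ∈ Ioo a b) (hw : w ∈ Ioo a b) (huw : u ≤ w) :
    HasIntervalIntegral (dprh a b F₀ f₀ θ₁ θ₂ θ₁' θ₂' u) a w
      ((θ₁ - θ₁' * θ₂ / (θ₁ + θ₂ - θ₁')) * (f₀ u * F₀ u ^ (θ₁ + θ₂ - 1)) +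
        θ₁' * θ₂ * F₀ w ^ (θ₁ + θ₂ - θ₁') / (θ₁ + θ₂ - θ₁') * (f₀ u * F₀ u ^ (θ₁' - 1))) := by
  have lower := hasIntervalIntegral_dprh_of_le (θ₁ := θ₁) (θ₂ := θ₂) (θ₁' := θ₁')
    hderiv hf₀ hF₀ hFa hθ₂' hu.2 hu le_rfl
  have upper := ((hasIntervalIntegral_mul_rpow_sub_one hderiv hf₀ hF₀ hc hu hw).const_mul
    (θ₁' * θ₂ * f₀ u * F₀ u ^ (θ₁' - 1))).congr_ae (h := dprh a b F₀ f₀ θ₁ θ₂ θ₁' θ₂' u) <|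
    ae_of_all _ fun v hv => by
      rw [uIoc_of_le huw] at hv
      rw [dprh_of_lt hu.1 hv.1 (hv.2.trans_lt hw.2)]
      ring
  convert lower.trans upper using 1
  have hFu := hF₀ u hu
  have e₁ : F₀ u ^ θ₂' * F₀ u ^ (θ₁ + θ₂ - θ₂' - 1) = F₀ u ^ (θ₁ + θ₂ - 1) := by
    rw [← Real.rpow_add hFu]; ring_nf
  have e₂ : F₀ u ^ (θ₁' - 1) * F₀ u ^ (θ₁ + θ₂ - θ₁') = F₀ u ^ (θ₁ + θ₂ - 1) := by
    rw [← Real.rpow_add hFu]; ring_nf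
  field_simp
  linear_combination θ₁' * θ₂ * f₀ u * e₂ - (θ₁ + θ₂ - θ₁') * θ₁ * f₀ u * e₁

lemma hasIntervalIntegral_integral_dprh_of_le (hθ : 0 < θ₁ + θ₂) (hθ₁' : 0 < θ₁')
    (hθ₂' : 0 < θ₂') (hc : θ₁ + θ₂ - θ₁' ≠ 0) {z w : ℝ} (hz : z ∈ Ioo a b) (hw : w ∈ Ioo a b)
    (hzw : z ≤ w) :
    HasIntervalIntegral (fun u => ∫ v in a..w, dprh a b F₀ f₀ θ₁ θ₂ θ₁' θ₂' u v) a z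
      (F₀ z ^ (θ₁ + θ₂) + θ₂ * F₀ z ^ θ₁' / (θ₁ + θ₂ - θ₁') *
        (F₀ w ^ (θ₁ + θ₂ - θ₁') - F₀ z ^ (θ₁ + θ₂ - θ₁'))) := by
  have h := ((hasIntervalIntegral_mul_rpow_sub_one_of_tendsto_zero hderiv hf₀ hF₀ hFa hθ
      hz).const_mul (θ₁ - θ₁' * θ₂ / (θ₁ + θ₂ - θ₁'))).add
    ((hasIntervalIntegral_mul_rpow_sub_one_of_tendsto_zero hderiv hf₀ hF₀ hFa hθ₁' hz).const_mul
      (θ₁' * θ₂ * F₀ w ^ (θ₁ + θ₂ - θ₁') / (θ₁ + θ₂ - θ₁')))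
  convert h.congr_ae (ae_of_all _ fun u hu => ?_) using 1
  · have e : F₀ z ^ (θ₁ + θ₂) = F₀ z ^ θ₁' * F₀ z ^ (θ₁ + θ₂ - θ₁') := by
      rw [← Real.rpow_add (hF₀ z hz)]; ring_nf
    rw [e]
    field_simp
    ring
  · rw [uIoc_of_le hz.1.le] at hu
    exact (hasIntervalIntegral_dprh_of_ge hderiv hf₀ hF₀ hFa hθ₂' hc
      ⟨hu.1, hu.2.trans_lt hz.2⟩ hw (hu.2.trans hzw)).2

lemma hasIntervalIntegral_integral_dprh_of_gt (hθ : 0 < θ₁ + θ₂) (hθ₁' : 0 < θ₁')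
    (hθ₂' : 0 < θ₂') (hc : θ₁ + θ₂ - θ₁' ≠ 0) (hd : θ₁ + θ₂ - θ₂' ≠ 0) {z w : ℝ}
    (hz : z ∈ Ioo a b) (hw : w ∈ Ioo a b) (hwz : w < z) :
    HasIntervalIntegral (fun u => ∫ v in a..w, dprh a b F₀ f₀ θ₁ θ₂ θ₁' θ₂' u v) a z
      (F₀ w ^ (θ₁ + θ₂) + θ₁ * F₀ w ^ θ₂' / (θ₁ + θ₂ - θ₂') *
        (F₀ z ^ (θ₁ + θ₂ - θ₂') - F₀ w ^ (θ₁ + θ₂ - θ₂'))) := by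
  have lower := hasIntervalIntegral_integral_dprh_of_le hderiv hf₀ hF₀ hFa hθ hθ₁' hθ₂' hc
    hw hw le_rfl
  have upper := ((hasIntervalIntegral_mul_rpow_sub_one hderiv hf₀ hF₀ hd hw hz).const_mul
    (θ₁ * F₀ w ^ θ₂')).congr_ae
      (h := fun u => ∫ v in a..w, dprh a b F₀ f₀ θ₁ θ₂ θ₁' θ₂' u v) <|
    ae_of_all _ fun u hu => by
      rw [uIoc_of_le hwz.le] at hu
      rw [(hasIntervalIntegral_dprh_of_le hderiv hf₀ hF₀ hFa hθ₂' (hu.2.trans_lt hz.2) hw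
        hu.1.le).2]
  convert lower.trans upper using 1
  field_simp
  ring

end Density

theorem dprh_cdf_case1_general
    (a b : ℝ) (F₀ f₀ : ℝ → ℝ)
    (hderiv : ∀ y ∈ Ioo a b, HasDerivAt F₀ (f₀ y) y)
    (hf₀pos : ∀ y ∈ Ioo a b, 0 < f₀ y)
    (hF₀pos : ∀ y ∈ Ioo a b, 0 < F₀ y)
    (hFa : Filter.Tendsto F₀ (nhdsWithin a (Ioi a)) (nhds 0))
    (θ₁ θ₂ θ₁' θ₂' : ℝ) (hθ₁ : 0 < θ₁) (hθ₂ : 0 < θ₂) (hθ₁' : 0 < θ₁') (hθ₂' : 0 < θ₂')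
    (hne₁ : θ₁ + θ₂ ≠ θ₁') (hne₂ : θ₁ + θ₂ ≠ θ₂') (y₁ y₂ : ℝ)
    :
    (a < y₁ → y₁ < y₂ → y₂ < b →
      (∫ u in a..y₁, ∫ v in a..y₂, dprh a b F₀ f₀ θ₁ θ₂ θ₁' θ₂' u v) =
        F₀ y₁ ^ (θ₁ + θ₂) + θ₂ * F₀ y₁ ^ θ₁' / (θ₁ + θ₂ - θ₁') *
          (F₀ y₂ ^ (θ₁ + θ₂ - θ₁') - F₀ y₁ ^ (θ₁ + θ₂ - θ₁'))) ∧
    (a < y₂ → y₂ < y₁ → y₁ < b →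
      (∫ u in a..y₁, ∫ v in a..y₂, dprh a b F₀ f₀ θ₁ θ₂ θ₁' θ₂' u v) =
        F₀ y₂ ^ (θ₁ + θ₂) + θ₁ * F₀ y₂ ^ θ₂' / (θ₁ + θ₂ - θ₂') *
          (F₀ y₁ ^ (θ₁ + θ₂ - θ₂') - F₀ y₂ ^ (θ₁ + θ₂ - θ₂'))) := by
  have hf₀ : ∀ y ∈ Ioo a b, 0 ≤ f₀ y := fun y hy => (hf₀pos y hy).le
  have hθ : 0 < θ₁ + θ₂ := add_pos hθ₁ hθ₂
  have hc : θ₁ + θ₂ - θ₁' ≠ 0 := sub_ne_zero.2 hne₁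
  refine ⟨fun h₁ h₁₂ h₂ => ?_, fun h₂ h₂₁ h₁ => ?_⟩
  · exact (hasIntervalIntegral_integral_dprh_of_le hderiv hf₀ hF₀pos hFa hθ hθ₁' hθ₂' hc
      ⟨h₁, h₁₂.trans h₂⟩ ⟨h₁.trans h₁₂, h₂⟩ h₁₂.le).2
  · exact (hasIntervalIntegral_integral_dprh_of_gt hderiv hf₀ hF₀pos hFa hθ hθ₁' hθ₂' hc
      (sub_ne_zero.2 hne₂) ⟨h₂.trans h₂₁, h₁⟩ ⟨h₂, h₂₁.trans h₁⟩ h₂₁).2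

theorem dprh_cdf_case1
    (a b : ℝ) (hab : a < b) (F₀ f₀ : ℝ → ℝ)
    (hderiv : ∀ y ∈ Ioo a b, HasDerivAt F₀ (f₀ y) y)
    (hf₀cont : ContinuousOn f₀ (Ioo a b))
    (hmono : StrictMonoOn F₀ (Ioo a b))
    (hf₀pos : ∀ y ∈ Ioo a b, 0 < f₀ y)
    (hF₀pos : ∀ y ∈ Ioo a b, 0 < F₀ y)
    (hF₀lt1 : ∀ y ∈ Ioo a b, F₀ y < 1)
    (hFa : Filter.Tendsto F₀ (nhdsWithin a (Ioi a)) (nhds 0))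
    (hFb : Filter.Tendsto F₀ (nhdsWithin b (Iio b)) (nhds 1))
    (θ₁ θ₂ θ₁' θ₂' : ℝ) (hθ₁ : 0 < θ₁) (hθ₂ : 0 < θ₂) (hθ₁' : 0 < θ₁') (hθ₂' : 0 < θ₂')
    (hne₁ : θ₁ + θ₂ ≠ θ₁') (hne₂ : θ₁ + θ₂ ≠ θ₂') (y₁ y₂ : ℝ)
    :
    (a < y₁ → y₁ < y₂ → y₂ < b →
      (∫ u in a..y₁, ∫ v in a..y₂, dprh a b F₀ f₀ θ₁ θ₂ θ₁' θ₂' u v) =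
        F₀ y₁ ^ (θ₁ + θ₂) + θ₂ * F₀ y₁ ^ θ₁' / (θ₁ + θ₂ - θ₁') *
          (F₀ y₂ ^ (θ₁ + θ₂ - θ₁') - F₀ y₁ ^ (θ₁ + θ₂ - θ₁'))) ∧
    (a < y₂ → y₂ < y₁ → y₁ < b →
      (∫ u in a..y₁, ∫ v in a..y₂, dprh a b F₀ f₀ θ₁ θ₂ θ₁' θ₂' u v) =
        F₀ y₂ ^ (θ₁ + θ₂) + θ₁ * F₀ y₂ ^ θ₂' / (θ₁ + θ₂ - θ₂') *
          (F₀ y₁ ^ (θ₁ + θ₂ - θ₂') - F₀ y₂ ^ (θ₁ + θ₂ - θ₂'))) :=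
  dprh_cdf_case1_general a b F₀ f₀ hderiv hf₀pos hF₀pos hFa θ₁ θ₂ θ₁' θ₂' hθ₁ hθ₂ hθ₁' hθ₂' hne₁
    hne₂ y₁ y₂
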